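/- arXiv:2411.10141 — 2 statements merged into one kernel-verified Lean document; each statement's English description precedes it below -/
import Mathlib

section
/- Assume λ_1 is the largest (not necessarily unique) eigenvalue of the family, i.e. λ_i ≤ λ_1 and μ_i ≤ λ_1 for all i. Then for every m ≥ 0 and every w ∈ ℝ² with ‖w‖ = 1, the Rayleigh quotient satisfies wᵀ E_m w ≤ n·e^{m·λ_1}. In particular the largest eigenvalue of E_m is at most n·e^{m·λ_1}, so the largest eigenvalue of the log-exp-supremum cannot exceed λ_1 (Lemma 5). -/
/-!
Each `X_i` has the orthonormal eigenvectors `u_i, v_i` with eigenvalues `λ_i, μ_i`, so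
`exp (m X_i) = e^{m λ_i} u_i u_iᵀ + e^{m μ_i} v_i v_iᵀ`. Hence
`wᵀ exp (m X_i) w = e^{m λ_i} ⟨u_i, w⟩² + e^{m μ_i} ⟨v_i, w⟩² ≤ e^{m λ_1} ‖w‖²`,
by `m ≥ 0`, monotonicity of `exp` and Parseval `⟨u_i, w⟩² + ⟨v_i, w⟩² = ‖w‖²`.
Summing over the family gives the bound.
-/

open Matrix

/-- The symmetric 2×2 matrix with spectral data `λ, μ, u, v`. -/
noncomputable def Xmat (lam mu : ℝ) (u v : Fin 2 → ℝ) : Matrix (Fin 2) (Fin 2) ℝ :=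
  lam • vecMulVec u u + mu • vecMulVec v v

/-- `E_m = Σ_i exp(m·X_i)`. -/
noncomputable def Efam {k : ℕ} (lam mu : Fin k → ℝ) (u v : Fin k → Fin 2 → ℝ)
    (m : ℝ) : Matrix (Fin 2) (Fin 2) ℝ :=
  ∑ i, NormedSpace.exp (m • Xmat (lam i) (mu i) (u i) (v i))

namespace Matrix

variable {ι : Type*} [Fintype ι]

theorem pow_mulVec_of_mulVec_eq_smul [DecidableEq ι] {R : Type*} [CommSemiring R]
    {A : Matrix ι ι R} {x : ι → R} {c : R} (h : A *ᵥ x = c • x) (k : ℕ) :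
    A ^ k *ᵥ x = c ^ k • x := by
  induction k with
  | zero => simp
  | succ k ih => rw [pow_succ, ← mulVec_mulVec, h, mulVec_smul, ih, smul_smul, pow_succ']

-- `exp` does not depend on the norm; the operator norm only makes the series lemmas available.
open scoped Norms.Operator in
theorem exp_mulVec_of_mulVec_eq_smul [DecidableEq ι] {𝕂 : Type*} [RCLike 𝕂]
    {A : Matrix ι ι 𝕂} {x : ι → 𝕂} {c : 𝕂} (h : A *ᵥ x = c • x) :
    NormedSpace.exp A *ᵥ x = NormedSpace.exp c • x := by
  have hA := (NormedSpace.exp_series_hasSum_exp' (𝕂 := 𝕂) A).map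
    (mulVec.addMonoidHomLeft x) (continuous_id.matrix_mulVec continuous_const)
  have hc := (NormedSpace.exp_series_hasSum_exp' (𝕂 := 𝕂) c).smul_const x
  refine hA.unique ?_
  convert hc using 2 with k
  change ((k.factorial : 𝕂)⁻¹ • A ^ k) *ᵥ x = _
  rw [smul_mulVec, pow_mulVec_of_mulVec_eq_smul h, smul_smul, smul_eq_mul]

theorem dotProduct_vecMulVec_self_mulVec {R : Type*} [CommSemiring R] (a w : ι → R) :
    w ⬝ᵥ (vecMulVec a a *ᵥ w) = (a ⬝ᵥ w) ^ 2 := by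
  rw [vecMulVec_mulVec, op_smul_eq_smul, dotProduct_smul, smul_eq_mul, dotProduct_comm, sq]

theorem vecMulVec_add_vecMulVec_eq_one {R : Type*} [CommRing R] {u v : Fin 2 → R}
    (hu : u ⬝ᵥ u = 1) (hv : v ⬝ᵥ v = 1) (huv : u ⬝ᵥ v = 0) :
    vecMulVec u u + vecMulVec v v = 1 := by
  simp only [dotProduct, Fin.sum_univ_two] at hu hv huv
  set U : Matrix (Fin 2) (Fin 2) R := of ![u, v]
  have hUUt : U * Uᵀ = 1 := by
    ext i j
    fin_cases i <;> fin_cases j <;> simp [U, mul_apply, hu, hv, huv, mul_comm (v _) (u _)]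
  have hUtU : Uᵀ * U = vecMulVec u u + vecMulVec v v := by
    ext i j
    simp [U, mul_apply, Fin.sum_univ_two, vecMulVec_apply]
  rw [← hUtU, mul_eq_one_comm.mp hUUt]

end Matrix

section Xmat

variable {lam mu : ℝ} {u v : Fin 2 → ℝ}

theorem Xmat_mulVec_left (hu : u ⬝ᵥ u = 1) (huv : u ⬝ᵥ v = 0) :
    Xmat lam mu u v *ᵥ u = lam • u := by
  simp [Xmat, add_mulVec, smul_mulVec, vecMulVec_mulVec, hu, dotProduct_comm v u, huv]

theorem Xmat_mulVec_right (hv : v ⬝ᵥ v = 1) (huv : u ⬝ᵥ v = 0) :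
    Xmat lam mu u v *ᵥ v = mu • v := by
  simp [Xmat, add_mulVec, smul_mulVec, vecMulVec_mulVec, hv, huv]

theorem exp_smul_Xmat (hu : u ⬝ᵥ u = 1) (hv : v ⬝ᵥ v = 1) (huv : u ⬝ᵥ v = 0) (m : ℝ) :
    NormedSpace.exp (m • Xmat lam mu u v) =
      Real.exp (m * lam) • vecMulVec u u + Real.exp (m * mu) • vecMulVec v v := by
  have hexp_u : NormedSpace.exp (m • Xmat lam mu u v) *ᵥ u = Real.exp (m * lam) • u := by
    rw [Real.exp_eq_exp_ℝ]
    exact exp_mulVec_of_mulVec_eq_smul (by rw [smul_mulVec, Xmat_mulVec_left hu huv, smul_smul])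
  have hexp_v : NormedSpace.exp (m • Xmat lam mu u v) *ᵥ v = Real.exp (m * mu) • v := by
    rw [Real.exp_eq_exp_ℝ]
    exact exp_mulVec_of_mulVec_eq_smul (by rw [smul_mulVec, Xmat_mulVec_right hv huv, smul_smul])
  rw [← mul_one (NormedSpace.exp _), ← vecMulVec_add_vecMulVec_eq_one hu hv huv, mul_add,
    mul_vecMulVec, mul_vecMulVec, hexp_u, hexp_v, smul_vecMulVec, smul_vecMulVec]

theorem dotProduct_exp_smul_Xmat_mulVec_le (hu : u ⬝ᵥ u = 1) (hv : v ⬝ᵥ v = 1)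
    (huv : u ⬝ᵥ v = 0) {m L : ℝ} (hm : 0 ≤ m) (hlam : lam ≤ L) (hmu : mu ≤ L)
    (w : Fin 2 → ℝ) :
    w ⬝ᵥ (NormedSpace.exp (m • Xmat lam mu u v) *ᵥ w) ≤ Real.exp (m * L) * (w ⬝ᵥ w) := by
  have parseval : w ⬝ᵥ w = (u ⬝ᵥ w) ^ 2 + (v ⬝ᵥ w) ^ 2 := by
    nth_rewrite 2 [← one_mulVec w]
    rw [← vecMulVec_add_vecMulVec_eq_one hu hv huv, add_mulVec, dotProduct_add,
      dotProduct_vecMulVec_self_mulVec, dotProduct_vecMulVec_self_mulVec]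
  have hexp_lam : Real.exp (m * lam) ≤ Real.exp (m * L) := by gcongr
  have hexp_mu : Real.exp (m * mu) ≤ Real.exp (m * L) := by gcongr
  rw [exp_smul_Xmat hu hv huv, add_mulVec, smul_mulVec, smul_mulVec, dotProduct_add,
    dotProduct_smul, dotProduct_smul, dotProduct_vecMulVec_self_mulVec,
    dotProduct_vecMulVec_self_mulVec, parseval, smul_eq_mul, smul_eq_mul, mul_add]
  gcongr

end Xmat

theorem rayleigh_upper_bound_general (n : ℕ) (lam mu : Fin (n + 1) → ℝ)
    (u v : Fin (n + 1) → Fin 2 → ℝ)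
    (hu : ∀ i, u i ⬝ᵥ u i = 1) (hv : ∀ i, v i ⬝ᵥ v i = 1)
    (huv : ∀ i, u i ⬝ᵥ v i = 0)
    (hmax : ∀ i, lam i ≤ lam 0 ∧ mu i ≤ lam 0) :
    ∀ m : ℝ, 0 ≤ m → ∀ w : Fin 2 → ℝ, w ⬝ᵥ w = 1 →
      w ⬝ᵥ (Efam lam mu u v m *ᵥ w) ≤ (n + 1 : ℝ) * Real.exp (m * lam 0) := by
  intro m hm w hw
  calc w ⬝ᵥ (Efam lam mu u v m *ᵥ w)
      = ∑ i, w ⬝ᵥ (NormedSpace.exp (m • Xmat (lam i) (mu i) (u i) (v i)) *ᵥ w) := by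
        rw [Efam, sum_mulVec, dotProduct_sum]
    _ ≤ ∑ _i : Fin (n + 1), Real.exp (m * lam 0) := by
        gcongr with i
        simpa [hw] using dotProduct_exp_smul_Xmat_mulVec_le (hu i) (hv i) (huv i) hm
          (hmax i).1 (hmax i).2 w
    _ = (n + 1 : ℝ) * Real.exp (m * lam 0) := by simp

/-- Lemma 5: if `λ_1` is the (not necessarily unique) largest
eigenvalue of the family, then for every `m ≥ 0` and every unit vector `w`,
the Rayleigh product satisfies `wᵀ E_m w ≤ n·e^{m·λ_1}` (here the family has
`n + 1` members). -/
theorem rayleigh_upper_bound (n : ℕ) (lam mu : Fin (n + 1) → ℝ)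
    (u v : Fin (n + 1) → Fin 2 → ℝ)
    (hu : ∀ i, u i ⬝ᵥ u i = 1) (hv : ∀ i, v i ⬝ᵥ v i = 1)
    (huv : ∀ i, u i ⬝ᵥ v i = 0) (hle : ∀ i, mu i ≤ lam i)
    (hmax : ∀ i, lam i ≤ lam 0 ∧ mu i ≤ lam 0) :
    ∀ m : ℝ, 0 ≤ m → ∀ w : Fin 2 → ℝ, w ⬝ᵥ w = 1 →
      w ⬝ᵥ (Efam lam mu u v m *ᵥ w) ≤ (n + 1 : ℝ) * Real.exp (m * lam 0) :=
  rayleigh_upper_bound_general n lam mu u v hu hv huv hmax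
end

section
/- Let n ≥ 2 and assume: λ_1 is the unique largest eigenvalue of the family (λ_1 > μ_1, and λ_1 > λ_i and λ_1 > μ_i for all i ≥ 2); λ_2 is the unique second largest eigenvalue (μ_1 < λ_2, μ_i < λ_2 for all i ≥ 2, and λ_i < λ_2 for all i ≥ 3); ⟨u_2, u_1⟩ ≠ 0; and u_2 is not parallel to u_1, so that by Theorem 1 the log-exp-supremum is S := λ_1·u_1 u_1ᵀ + λ_2·v_1 v_1ᵀ. Then for every function φ from real symmetric 2×2 matrices to ℝ that is Loewner-monotone on U(𝒳) (i.e. A, B ∈ U(𝒳) with A ≤_L B implies φ(A) ≤ φ(B)), there exists Y ∈ U(𝒳) with Y ≠ S and φ(Y) ≤ φ(S); hence S is not the unique minimiser of φ on U(𝒳). (Corollary 2.) -/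
open Matrix

/-- Two vectors of ℝ² are parallel (aligned) if one is a scalar multiple of
the other. -/
def Parallel (a b : Fin 2 → ℝ) : Prop :=
  ∃ c : ℝ, a = c • b ∨ b = c • a

/-- The set of symmetric Loewner upper bounds of the family. -/
def USet {k : ℕ} (lam mu : Fin k → ℝ) (u v : Fin k → Fin 2 → ℝ) :
    Set (Matrix (Fin 2) (Fin 2) ℝ) :=
  {Y | Y.IsSymm ∧ ∀ i, (Y - Xmat (lam i) (mu i) (u i) (v i)).PosSemidef}

/-
Lowering the `v₁`-eigenvalue of `S` from `λ₂` to `λ₂ - ε` gives `Y ≤_L S` with `Y ≠ S`, and `Y`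
still dominates every `X_i` for small `ε > 0`: for `i = 1` and `i ≥ 3` because `μ₁ < λ₂` and
`max (λ_i, μ_i) < λ₂` leave a gap; for `i = 2` because in the frame `(u₁, v₁)` the form of
`S - X₂` has determinant `(λ₂ - μ₂) ⟨u₂, u₁⟩² (λ₁ - λ₂) > 0`, so it can absorb `-ε v₁v₁ᵀ`.
Monotonicity then gives `φ Y ≤ φ S`. The code indexes the family from `0`, the paper from `1`.
-/

open Filter Topology

theorem quadratic_form_nonneg {α β γ : ℝ} (hα : 0 < α) (hdet : β ^ 2 ≤ α * γ) (p q : ℝ) :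
    0 ≤ α * p ^ 2 + 2 * β * p * q + γ * q ^ 2 := by
  nlinarith [sq_nonneg (α * p + β * q), mul_nonneg (sub_nonneg.2 hdet) (sq_nonneg q)]

section

variable {u v u' v' : Fin 2 → ℝ}

theorem dotProduct_eq_of_orthonormal (hu : u ⬝ᵥ u = 1) (hv : v ⬝ᵥ v = 1) (huv : u ⬝ᵥ v = 0)
    (w x : Fin 2 → ℝ) : w ⬝ᵥ x = (w ⬝ᵥ u) * (u ⬝ᵥ x) + (w ⬝ᵥ v) * (v ⬝ᵥ x) := by
  simp only [dotProduct, Fin.sum_univ_two] at *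
  -- the columns of the orthogonal matrix with rows `u`, `v` are orthonormal as well
  have h₀₀ : u 0 ^ 2 + v 0 ^ 2 = 1 := by
    linear_combination (v 1 * v 1) * hu + (1 - u 0 * u 0) * hv + (u 0 * v 0 - u 1 * v 1) * huv
  have h₁₁ : u 1 ^ 2 + v 1 ^ 2 = 1 := by
    linear_combination (v 0 * v 0) * hu + (1 - u 1 * u 1) * hv + (u 1 * v 1 - u 0 * v 0) * huv
  have h₀₁ : u 0 * u 1 + v 0 * v 1 = 0 := by
    linear_combination (-v 0 * v 1) * hu + (-u 0 * u 1) * hv + (u 0 * v 1 + u 1 * v 0) * huv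
  linear_combination (-(w 0 * x 0)) * h₀₀ + (-(w 1 * x 1)) * h₁₁ + (-(w 0 * x 1 + w 1 * x 0)) * h₀₁

theorem sq_dotProduct_add_sq_of_orthonormal (hu : u ⬝ᵥ u = 1) (hv : v ⬝ᵥ v = 1)
    (huv : u ⬝ᵥ v = 0) (x : Fin 2 → ℝ) : (u ⬝ᵥ x) ^ 2 + (v ⬝ᵥ x) ^ 2 = x ⬝ᵥ x := by
  rw [dotProduct_eq_of_orthonormal hu hv huv x x, dotProduct_comm x u, dotProduct_comm x v]
  ring

theorem isSymm_Xmat (l m : ℝ) : (Xmat l m u v).IsSymm := by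
  ext i j
  simp only [Xmat, transpose_apply, Matrix.add_apply, Matrix.smul_apply, vecMulVec_apply,
    smul_eq_mul]
  ring

theorem dotProduct_Xmat_mulVec (l m : ℝ) (x : Fin 2 → ℝ) :
    x ⬝ᵥ (Xmat l m u v *ᵥ x) = l * (u ⬝ᵥ x) ^ 2 + m * (v ⬝ᵥ x) ^ 2 := by
  simp only [Xmat, dotProduct, mulVec, vecMulVec_apply, Fin.sum_univ_two, Matrix.add_apply,
    Matrix.smul_apply, smul_eq_mul]
  ring

theorem posSemidef_Xmat_sub_Xmat {l m l' m' : ℝ}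
    (h : ∀ x, l' * (u' ⬝ᵥ x) ^ 2 + m' * (v' ⬝ᵥ x) ^ 2 ≤ l * (u ⬝ᵥ x) ^ 2 + m * (v ⬝ᵥ x) ^ 2) :
    (Xmat l m u v - Xmat l' m' u' v').PosSemidef := by
  refine posSemidef_iff_dotProduct_mulVec.2
    ⟨isHermitian_iff_isSymm.2 ((isSymm_Xmat _ _).sub (isSymm_Xmat _ _)), fun x => ?_⟩
  rw [star_trivial, sub_mulVec, dotProduct_sub, dotProduct_Xmat_mulVec, dotProduct_Xmat_mulVec]
  linarith [h x]

theorem posSemidef_Xmat_sub_Xmat_of_le {l m l' m' : ℝ} (hl : l' ≤ l) (hm : m' ≤ m) :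
    (Xmat l m u v - Xmat l' m' u v).PosSemidef :=
  posSemidef_Xmat_sub_Xmat fun _ => by gcongr

theorem posSemidef_Xmat_sub_Xmat_of_max_le (hu : u ⬝ᵥ u = 1) (hv : v ⬝ᵥ v = 1)
    (huv : u ⬝ᵥ v = 0) (hu' : u' ⬝ᵥ u' = 1) (hv' : v' ⬝ᵥ v' = 1) (huv' : u' ⬝ᵥ v' = 0)
    {l m l' m' : ℝ} (hl : max l' m' ≤ l) (hm : max l' m' ≤ m) :
    (Xmat l m u v - Xmat l' m' u' v').PosSemidef := by
  refine posSemidef_Xmat_sub_Xmat fun x => ?_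
  calc l' * (u' ⬝ᵥ x) ^ 2 + m' * (v' ⬝ᵥ x) ^ 2
      ≤ max l' m' * (u' ⬝ᵥ x) ^ 2 + max l' m' * (v' ⬝ᵥ x) ^ 2 := by
        gcongr
        exacts [le_max_left _ _, le_max_right _ _]
    _ = max l' m' * (u ⬝ᵥ x) ^ 2 + max l' m' * (v ⬝ᵥ x) ^ 2 := by
      rw [← mul_add, ← mul_add, sq_dotProduct_add_sq_of_orthonormal hu' hv' huv',
        sq_dotProduct_add_sq_of_orthonormal hu hv huv]
    _ ≤ l * (u ⬝ᵥ x) ^ 2 + m * (v ⬝ᵥ x) ^ 2 := by gcongr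

theorem posSemidef_Xmat_sub_Xmat_of_le_gap (hu : u ⬝ᵥ u = 1) (hv : v ⬝ᵥ v = 1)
    (huv : u ⬝ᵥ v = 0) (hu' : u' ⬝ᵥ u' = 1) (hv' : v' ⬝ᵥ v' = 1) (huv' : u' ⬝ᵥ v' = 0)
    {l l' m' ε : ℝ} (hm' : m' ≤ l') (hl' : l' < l) (hε₀ : 0 ≤ ε)
    (hε : ε ≤ (l' - m') * (u' ⬝ᵥ u) ^ 2 * (l - l') / (l - m')) :
    (Xmat l (l' - ε) u v - Xmat l' m' u' v').PosSemidef := by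
  set c := u' ⬝ᵥ u
  set s := u' ⬝ᵥ v
  have hcs : c ^ 2 + s ^ 2 = 1 := by
    have h := dotProduct_eq_of_orthonormal hu hv huv u' u'
    rw [hu', dotProduct_comm u u', dotProduct_comm v u'] at h
    linear_combination -h
  rw [le_div_iff₀ (by linarith)] at hε
  -- in the coordinates `p = u ⬝ᵥ x`, `q = v ⬝ᵥ x` the difference is the binary form
  -- `A p² - 2 (l' - m') c s p q + ((l' - m') c² - ε) q²`
  set A := l - m' - (l' - m') * c ^ 2 with hA_def
  have hA : 0 < A := by nlinarith [mul_nonneg (sub_nonneg.2 hm') (sq_nonneg s)]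
  have hdet : (-((l' - m') * c * s)) ^ 2 ≤ A * ((l' - m') * c ^ 2 - ε) := by
    have hAle : A ≤ l - m' := by nlinarith [mul_nonneg (sub_nonneg.2 hm') (sq_nonneg c)]
    have hdet₀ :
        A * ((l' - m') * c ^ 2) - ((l' - m') * c * s) ^ 2 = (l' - m') * c ^ 2 * (l - l') := by
      rw [hA_def]
      linear_combination (-((l' - m') ^ 2 * c ^ 2)) * hcs
    nlinarith [mul_le_mul_of_nonneg_right hAle hε₀]
  refine posSemidef_Xmat_sub_Xmat fun x => ?_
  have ha : u' ⬝ᵥ x = c * (u ⬝ᵥ x) + s * (v ⬝ᵥ x) := dotProduct_eq_of_orthonormal hu hv huv u' x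
  have hab : (u' ⬝ᵥ x) ^ 2 + (v' ⬝ᵥ x) ^ 2 = (u ⬝ᵥ x) ^ 2 + (v ⬝ᵥ x) ^ 2 := by
    rw [sq_dotProduct_add_sq_of_orthonormal hu' hv' huv',
      sq_dotProduct_add_sq_of_orthonormal hu hv huv]
  have := quadratic_form_nonneg hA hdet (u ⬝ᵥ x) (v ⬝ᵥ x)
  linear_combination this + m' * hab
    + (l' - m') * (u' ⬝ᵥ x + c * (u ⬝ᵥ x) + s * (v ⬝ᵥ x)) * ha + (l' - m') * (v ⬝ᵥ x) ^ 2 * hcs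

end

theorem mem_USet_of_posSemidef_sub {k : ℕ} {lam mu : Fin k → ℝ} {u v : Fin k → Fin 2 → ℝ}
    {Y Z : Matrix (Fin 2) (Fin 2) ℝ} (hY : Y ∈ USet lam mu u v) (hZ : Z.IsSymm)
    (hYZ : (Z - Y).PosSemidef) : Z ∈ USet lam mu u v :=
  ⟨hZ, fun i => by simpa only [sub_add_sub_cancel'] using (hY.2 i).add hYZ⟩

theorem eventually_Xmat_mem_USet {n : ℕ} {lam mu : Fin (n + 2) → ℝ}
    {u v : Fin (n + 2) → Fin 2 → ℝ} (hu : ∀ i, u i ⬝ᵥ u i = 1) (hv : ∀ i, v i ⬝ᵥ v i = 1)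
    (huv : ∀ i, u i ⬝ᵥ v i = 0) (hlam₁ : lam 1 < lam 0) (hmu : ∀ i, mu i < lam 1)
    (hlam : ∀ i, i ≠ 0 → i ≠ 1 → lam i < lam 1) (hc : u 1 ⬝ᵥ u 0 ≠ 0) :
    ∀ᶠ ε in 𝓝[>] 0, Xmat (lam 0) (lam 1 - ε) (u 0) (v 0) ∈ USet lam mu u v := by
  refine (eventually_all.2 fun i => ?_).mono fun ε h => ⟨isSymm_Xmat _ _, h⟩
  rcases eq_or_ne i 0 with rfl | h0
  · filter_upwards [Ioc_mem_nhdsGT (sub_pos.2 (hmu 0))] with ε hε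
    exact posSemidef_Xmat_sub_Xmat_of_le le_rfl (by linarith [hε.2])
  rcases eq_or_ne i 1 with rfl | h1
  · have hgap : 0 < (lam 1 - mu 1) * (u 1 ⬝ᵥ u 0) ^ 2 * (lam 0 - lam 1) / (lam 0 - mu 1) :=
      div_pos (mul_pos (mul_pos (sub_pos.2 (hmu 1)) (sq_pos_of_ne_zero hc)) (sub_pos.2 hlam₁))
        (by linarith [hmu 1])
    filter_upwards [Ioc_mem_nhdsGT hgap] with ε hε
    exact posSemidef_Xmat_sub_Xmat_of_le_gap (hu 0) (hv 0) (huv 0) (hu 1) (hv 1) (huv 1)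
      (hmu 1).le hlam₁ hε.1.le hε.2
  · have hmax : max (lam i) (mu i) < lam 1 := max_lt (hlam i h0 h1) (hmu i)
    filter_upwards [Ioc_mem_nhdsGT (sub_pos.2 hmax)] with ε hε
    exact posSemidef_Xmat_sub_Xmat_of_max_le (hu 0) (hv 0) (huv 0) (hu i) (hv i) (huv i)
      (by linarith [hε.2]) (by linarith [hε.2])

theorem les_not_unique_minimiser_general (n : ℕ) (lam mu : Fin (n + 2) → ℝ)
    (u v : Fin (n + 2) → Fin 2 → ℝ)
    (hu : ∀ i, u i ⬝ᵥ u i = 1) (hv : ∀ i, v i ⬝ᵥ v i = 1)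
    (huv : ∀ i, u i ⬝ᵥ v i = 0)
    (hmax : ∀ i, i ≠ 0 → lam i < lam 0 ∧ mu i < lam 0)
    (hsecond : ∀ i, mu i < lam 1)
    (hsecond' : ∀ i, i ≠ 0 → i ≠ 1 → lam i < lam 1)
    (hperp : u 1 ⬝ᵥ u 0 ≠ 0) :
    ∀ φ : Matrix (Fin 2) (Fin 2) ℝ → ℝ,
      (∀ A B, A ∈ USet lam mu u v → B ∈ USet lam mu u v →
        (B - A).PosSemidef → φ A ≤ φ B) →
      ∃ Y ∈ USet lam mu u v,
        Y ≠ Xmat (lam 0) (lam 1) (u 0) (v 0) ∧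
        φ Y ≤ φ (Xmat (lam 0) (lam 1) (u 0) (v 0)) := by
  intro φ hφ
  obtain ⟨ε, hY, hε : 0 < ε⟩ :=
    ((eventually_Xmat_mem_USet hu hv huv (hmax 1 one_ne_zero).1 hsecond hsecond' hperp).and
      self_mem_nhdsWithin).exists
  have hSY : (Xmat (lam 0) (lam 1) (u 0) (v 0) - Xmat (lam 0) (lam 1 - ε) (u 0) (v 0)).PosSemidef :=
    posSemidef_Xmat_sub_Xmat_of_le le_rfl (by linarith)
  have hS := mem_USet_of_posSemidef_sub hY (isSymm_Xmat _ _) hSY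
  refine ⟨_, hY, fun h => ?_, hφ _ _ hY hS hSY⟩
  have hv₀ := congrArg (fun M => v 0 ⬝ᵥ (M *ᵥ v 0)) h
  simp only [dotProduct_Xmat_mulVec, hv 0] at hv₀
  linarith

/-- Corollary 2: under the hypotheses of Lemma 7 the
log-exp-supremum `S = λ_1·u_1 u_1ᵀ + λ_2·v_1 v_1ᵀ` is not the unique
minimiser on `U(𝒳)` of any Loewner-monotone function `φ`. -/
theorem les_not_unique_minimiser (n : ℕ) (lam mu : Fin (n + 2) → ℝ)
    (u v : Fin (n + 2) → Fin 2 → ℝ)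
    (hu : ∀ i, u i ⬝ᵥ u i = 1) (hv : ∀ i, v i ⬝ᵥ v i = 1)
    (huv : ∀ i, u i ⬝ᵥ v i = 0) (hle : ∀ i, mu i ≤ lam i)
    (hmu : mu 0 < lam 0)
    (hmax : ∀ i, i ≠ 0 → lam i < lam 0 ∧ mu i < lam 0)
    (hsecond : ∀ i, mu i < lam 1)
    (hsecond' : ∀ i, i ≠ 0 → i ≠ 1 → lam i < lam 1)
    (hperp : u 1 ⬝ᵥ u 0 ≠ 0)
    (hnpar : ¬ Parallel (u 1) (u 0)) :
    ∀ φ : Matrix (Fin 2) (Fin 2) ℝ → ℝ,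
      (∀ A B, A ∈ USet lam mu u v → B ∈ USet lam mu u v →
        (B - A).PosSemidef → φ A ≤ φ B) →
      ∃ Y ∈ USet lam mu u v,
        Y ≠ Xmat (lam 0) (lam 1) (u 0) (v 0) ∧
        φ Y ≤ φ (Xmat (lam 0) (lam 1) (u 0) (v 0)) :=
  les_not_unique_minimiser_general n lam mu u v hu hv huv hmax hsecond hsecond' hperp
end
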